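/- Let A and A' be two admissible arrays of size n, and let G(A), G(A') be their associated directed graphs on the vertex set {1,…,n}, where there is an arrow from vertex i to vertex j if and only if the (i,j) entry of the array equals 1/2. If φ : {1,…,n} → {1,…,n} is a bijection such that G(A) has an arrow from i to j precisely when G(A') has an arrow from φ(i) to φ(j), then φ is the identity and A = A'. -/
import Mathlib


/-- An admissible array of size `n` (indices numbered from `0`): an `n × n` matrix with
entries in `{0, 1/2}` such that `A_{ii} = 0` for `i < n−1`, `A_{i+1,i} = 1/2` for
`i < n−1`, `A_{ji} = 0` for `i < n−1` and `j > i+1`, and each entry of the last column is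
congruent modulo `ℤ` to the sum of the entries of the other columns in the same row. -/
def AdmissibleArray (n : ℕ) (A : Matrix (Fin n) (Fin n) ℝ) : Prop :=
  (∀ i j, A i j = 0 ∨ A i j = 1 / 2) ∧
  (∀ i : Fin n, (i : ℕ) < n - 1 → A i i = 0) ∧
  (∀ i i' : Fin n, (i : ℕ) < n - 1 → (i' : ℕ) = (i : ℕ) + 1 → A i' i = 1 / 2) ∧
  (∀ i j : Fin n, (i : ℕ) < n - 1 → (j : ℕ) > (i : ℕ) + 1 → A j i = 0) ∧
  (∀ lastc : Fin n, (lastc : ℕ) = n - 1 → ∀ j : Fin n,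
    ∃ m : ℤ, A j lastc - ∑ i ∈ Finset.univ.filter (fun i : Fin n => (i : ℕ) < n - 1), A j i = m)

/-- In an admissible array of size `n ≥ 2`, the last diagonal entry is `1/2`. -/
lemma admissibleArray_last_diag (n : ℕ) (hn : 2 ≤ n) (A : Matrix (Fin n) (Fin n) ℝ)
    (hA : AdmissibleArray n A) : A ⟨n - 1, by omega⟩ ⟨n - 1, by omega⟩ = 1 / 2 := by
  set L : Fin n := ⟨n - 1, by omega⟩ with hL
  set p : Fin n := ⟨n - 2, by omega⟩ with hp
  obtain ⟨m, hm⟩ := hA.2.2.2.2 L rfl L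
  have hsum : ∑ i ∈ Finset.univ.filter (fun i : Fin n => (i : ℕ) < n - 1), A L i = 1 / 2 := by
    rw [Finset.sum_eq_single p]
    · exact hA.2.2.1 p L (by simp [hp]; omega) (by simp [hp, hL]; omega)
    · intro b hb hbp
      simp only [Finset.mem_filter, Finset.mem_univ, true_and] at hb
      have hbv : (b : ℕ) ≠ n - 2 := fun h => hbp (Fin.ext (by simp [hp, h]))
      exact hA.2.2.2.1 b L (by omega) (by simp [hL]; omega)
    · intro h
      exact absurd (Finset.mem_filter.mpr ⟨Finset.mem_univ _, by simp [hp]; omega⟩) h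
  rw [hsum] at hm
  rcases hA.1 L L with h0 | h12
  · exfalso
    rw [h0] at hm
    have : ((2 * m : ℤ) : ℝ) = -1 := by push_cast; linarith
    have : (2 * m : ℤ) = -1 := by exact_mod_cast this
    omega
  · exact h12

/-- An admissible array of size `1` is zero. -/
lemma admissibleArray_one_zero (A : Matrix (Fin 1) (Fin 1) ℝ) (hA : AdmissibleArray 1 A)
    (i j : Fin 1) : A i j = 0 := by
  obtain ⟨m, hm⟩ := hA.2.2.2.2 j (by omega) i
  have hempty : ∑ k ∈ Finset.univ.filter (fun k : Fin 1 => (k : ℕ) < 1 - 1), A i k = 0 := by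
    apply Finset.sum_eq_zero
    intro k hk
    simp only [Finset.mem_filter] at hk
    omega
  rw [hempty, sub_zero] at hm
  rcases hA.1 i j with h0 | h12
  · exact h0
  · exfalso
    rw [h12] at hm
    have : ((2 * m : ℤ) : ℝ) = 1 := by push_cast; linarith
    have : (2 * m : ℤ) = 1 := by exact_mod_cast this
    omega

/-- If a bijection `φ` of `{0,…,n−1}` carries the directed graph of an admissible array `A`
(with an arrow `i → j` iff `A_{ij} = 1/2`) onto the directed graph of an admissible array
`A'`, then `φ` is the identity and `A = A'`. -/
theorem admissibleArray_graph_rigidity (n : ℕ) (A A' : Matrix (Fin n) (Fin n) ℝ)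
    (hA : AdmissibleArray n A) (hA' : AdmissibleArray n A')
    (φ : Equiv.Perm (Fin n))
    (hφ : ∀ i j, A i j = 1 / 2 ↔ A' (φ i) (φ j) = 1 / 2) :
    φ = Equiv.refl (Fin n) ∧ A = A' := by
  rcases Nat.lt_or_ge n 2 with hn | hn
  · -- n = 0 or n = 1 : everything is trivial
    interval_cases n
    · refine ⟨Equiv.ext fun i => i.elim0, ?_⟩
      ext i j
      exact i.elim0
    · refine ⟨Equiv.ext fun i => Subsingleton.elim _ _, ?_⟩
      ext i j
      rw [admissibleArray_one_zero A hA i j, admissibleArray_one_zero A' hA' i j]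
  · -- main case n ≥ 2
    have key : ∀ d : ℕ, ∀ j : Fin n, n - 1 - d ≤ (j : ℕ) → φ j = j := by
      intro d
      induction d with
      | zero =>
        intro j hj
        have hjL : (j : ℕ) = n - 1 := by omega
        have hself : A j j = 1 / 2 := by
          have := admissibleArray_last_diag n hn A hA
          have hje : j = ⟨n - 1, by omega⟩ := Fin.ext (by simpa using hjL)
          rw [hje]; exact this
        have h' : A' (φ j) (φ j) = 1 / 2 := (hφ j j).mp hself
        by_contra hne
        have hlt : (φ j : ℕ) < n - 1 := by
          rcases Nat.lt_or_ge ((φ j : ℕ)) (n - 1) with h | h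
          · exact h
          · exfalso
            exact hne (Fin.ext (by omega))
        rw [hA'.2.1 (φ j) hlt] at h'
        norm_num at h'
      | succ d ih =>
        intro j hj
        by_cases hcase : n - 1 - d ≤ (j : ℕ)
        · exact ih j hcase
        · push_neg at hcase
          have hj1 : (j : ℕ) + 1 < n := by omega
          set j' : Fin n := ⟨(j : ℕ) + 1, hj1⟩ with hj'
          have hfix : φ j' = j' := ih j' (by simp [hj']; omega)
          have hE : A j' j = 1 / 2 := hA.2.2.1 j j' (by omega) rfl
          have hE' : A' j' (φ j) = 1 / 2 := by
            have := (hφ j' j).mp hE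
            rwa [hfix] at this
          rcases lt_trichotomy ((φ j : ℕ)) ((j : ℕ)) with hlt | heq | hgt
          · exfalso
            have hz : A' j' (φ j) = 0 :=
              hA'.2.2.2.1 (φ j) j' (by omega) (by simp [hj']; omega)
            rw [hz] at hE'
            norm_num at hE'
          · exact Fin.ext heq
          · exfalso
            have hfix2 : φ (φ j) = φ j := ih (φ j) (by omega)
            have : φ j = j := φ.injective hfix2
            have : (φ j : ℕ) = (j : ℕ) := by rw [this]
            omega
    have hid : φ = Equiv.refl (Fin n) := Equiv.ext fun i => key (n - 1) i (by omega)
    refine ⟨hid, ?_⟩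
    subst hid
    ext i j
    have hiff : A i j = 1 / 2 ↔ A' i j = 1 / 2 := hφ i j
    rcases hA.1 i j with h0 | h12 <;> rcases hA'.1 i j with h0' | h12'
    · rw [h0, h0']
    · exfalso; rw [hiff.mpr h12'] at h0; norm_num at h0
    · exfalso; rw [hiff.mp h12] at h0'; norm_num at h0'
    · rw [h12, h12']
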